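/- Let a ∈ ℝ^n lie in A_s and let δ > 0 satisfy δ < |a_j| for every index j with a_j ≠ 0. Then for every x in the closed ball of radius δ/2 around a, every reflection y ∈ R_{A_s}(x) = 2P_{A_s}(x) − x (i.e., y = 2x⁺ − x for some projection x⁺ of x onto A_s) satisfies ‖y − a‖ ≤ δ/2; that is, the reflector R_{A_s} maps the ball B_{δ/2}(a) into itself. -/

import Mathlib

/-- Number of nonzero entries of a vector (the ℓ₀-"norm"). -/
noncomputable def sparsity {n : ℕ} (x : EuclideanSpace ℝ (Fin n)) : ℕ :=
  (Finset.univ.filter (fun i => x i ≠ 0)).card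

/-- `A_s`, the set of vectors with at most `s` nonzero entries. -/
def Asp (n s : ℕ) : Set (EuclideanSpace ℝ (Fin n)) := {x | sparsity x ≤ s}

/-- The (possibly set-valued) projector onto a set `Ω`. -/
def projSet {n : ℕ} (Ω : Set (EuclideanSpace ℝ (Fin n))) (x : EuclideanSpace ℝ (Fin n)) :
    Set (EuclideanSpace ℝ (Fin n)) :=
  {y | y ∈ Ω ∧ ∀ z ∈ Ω, ‖x - y‖ ≤ ‖x - z‖}

/-!
A projection `x⁺` of `x` onto `A_s` keeps `x` on its support and is zero elsewhere, and the
kept coordinates are `s` coordinates of `x` of largest modulus. If `‖x - a‖ ≤ δ/2` with `a ∈ A_s`,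
the coordinates of `x` on the support of `a` exceed `δ/2` in modulus while the others do not, so
`x⁺` keeps the whole support of `a`. Hence each coordinate of `2x⁺ - x - a` is `±(x - a)_i`, and
the reflection is exactly as far from `a` as `x` is.
-/

open Finset

namespace Sparse

variable {n s : ℕ}

noncomputable def coordSupport (x : EuclideanSpace ℝ (Fin n)) : Finset (Fin n) := {i | x i ≠ 0}

@[simp]
lemma mem_coordSupport {x : EuclideanSpace ℝ (Fin n)} {i : Fin n} :
    i ∈ coordSupport x ↔ x i ≠ 0 := by
  simp [coordSupport]

def restrictTo (T : Finset (Fin n)) (x : EuclideanSpace ℝ (Fin n)) : EuclideanSpace ℝ (Fin n) :=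
  WithLp.toLp 2 fun i => if i ∈ T then x i else 0

@[simp]
lemma restrictTo_apply (T : Finset (Fin n)) (x : EuclideanSpace ℝ (Fin n)) (i : Fin n) :
    restrictTo T x i = if i ∈ T then x i else 0 := rfl

lemma restrictTo_mem_Asp {T : Finset (Fin n)} (hT : #T ≤ s) (x : EuclideanSpace ℝ (Fin n)) :
    restrictTo T x ∈ Asp n s := by
  refine le_trans (card_le_card fun i hi => ?_) hT
  by_contra hiT
  simp [hiT] at hi

lemma norm_sub_sq_of_coordSupport_subset {T : Finset (Fin n)} {x v : EuclideanSpace ℝ (Fin n)}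
    (hv : coordSupport v ⊆ T) :
    ‖x - v‖ ^ 2 = ∑ i ∈ T, (x i - v i) ^ 2 + (‖x‖ ^ 2 - ∑ i ∈ T, x i ^ 2) := by
  have hvT : ∀ i ∈ Tᶜ, (x - v) i ^ 2 = x i ^ 2 := fun i hi => by
    have : v i = 0 := by_contra fun h => mem_compl.mp hi (hv (mem_coordSupport.mpr h))
    simp [this]
  rw [EuclideanSpace.real_norm_sq_eq, EuclideanSpace.real_norm_sq_eq,
    ← sum_add_sum_compl T, ← sum_add_sum_compl T (fun i => x i ^ 2), sum_congr rfl hvT]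
  simp only [PiLp.sub_apply]
  ring

lemma norm_sub_restrictTo_sq (T : Finset (Fin n)) (x : EuclideanSpace ℝ (Fin n)) :
    ‖x - restrictTo T x‖ ^ 2 = ‖x‖ ^ 2 - ∑ i ∈ T, x i ^ 2 := by
  have hsupp : coordSupport (restrictTo T x) ⊆ T := fun i hi => by
    by_contra hiT
    simp [hiT] at hi
  rw [norm_sub_sq_of_coordSupport_subset hsupp, sum_eq_zero fun i hi => by simp [hi]]
  ring

variable {x xp : EuclideanSpace ℝ (Fin n)}

lemma norm_sub_sq_le_of_mem_projSet (hxp : xp ∈ projSet (Asp n s) x)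
    {z : EuclideanSpace ℝ (Fin n)} (hz : z ∈ Asp n s) : ‖x - xp‖ ^ 2 ≤ ‖x - z‖ ^ 2 :=
  pow_le_pow_left₀ (norm_nonneg _) (hxp.2 z hz) 2

/-- `restrictTo (coordSupport xp) x` lies in `A_s` and is no farther from `x` than `xp`. -/
lemma apply_eq_of_mem_projSet (hxp : xp ∈ projSet (Asp n s) x) {i : Fin n} (hi : xp i ≠ 0) :
    xp i = x i := by
  have hle := norm_sub_sq_le_of_mem_projSet hxp
    (restrictTo_mem_Asp (T := coordSupport xp) hxp.1 x)
  rw [norm_sub_sq_of_coordSupport_subset subset_rfl, norm_sub_restrictTo_sq] at hle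
  have hzero : ∑ j ∈ coordSupport xp, (x j - xp j) ^ 2 = 0 :=
    le_antisymm (by linarith) (sum_nonneg fun j _ => sq_nonneg _)
  have hsq :=
    (sum_eq_zero_iff_of_nonneg fun j _ => sq_nonneg _).mp hzero i (mem_coordSupport.mpr hi)
  exact (sub_eq_zero.mp (pow_eq_zero_iff two_ne_zero |>.mp hsq)).symm

lemma sum_sq_le_of_mem_projSet (hxp : xp ∈ projSet (Asp n s) x) {T : Finset (Fin n)}
    (hT : #T ≤ s) : ∑ i ∈ T, x i ^ 2 ≤ ∑ i ∈ coordSupport xp, x i ^ 2 := by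
  have hle := norm_sub_sq_le_of_mem_projSet hxp (restrictTo_mem_Asp hT x)
  have hxp_sq : ∑ i ∈ coordSupport xp, (x i - xp i) ^ 2 = 0 :=
    sum_eq_zero fun i hi => by rw [apply_eq_of_mem_projSet hxp (mem_coordSupport.mp hi), sub_self,
      zero_pow two_ne_zero]
  rw [norm_sub_sq_of_coordSupport_subset subset_rfl, norm_sub_restrictTo_sq, hxp_sq] at hle
  linarith

lemma eq_zero_of_mem_projSet_of_sparsity_lt (hxp : xp ∈ projSet (Asp n s) x)
    (hlt : sparsity xp < s) {j : Fin n} (hj : xp j = 0) : x j = 0 := by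
  have hjS : j ∉ coordSupport xp := by simpa using hj
  have hcard : #(insert j (coordSupport xp)) ≤ s := by
    rw [card_insert_of_notMem hjS]
    exact hlt
  have := sum_sq_le_of_mem_projSet hxp hcard
  rw [sum_insert hjS] at this
  exact pow_eq_zero_iff two_ne_zero |>.mp (le_antisymm (by linarith) (sq_nonneg _))

lemma sq_le_sq_of_mem_projSet (hxp : xp ∈ projSet (Asp n s) x) {j k : Fin n} (hj : xp j = 0)
    (hk : xp k ≠ 0) : x j ^ 2 ≤ x k ^ 2 := by
  set S := coordSupport xp
  have hkS : k ∈ S := mem_coordSupport.mpr hk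
  have hjS : j ∉ S.erase k := fun h => mem_coordSupport.mp (mem_of_mem_erase h) hj
  have hcard : #(insert j (S.erase k)) ≤ s := by
    rw [card_insert_of_notMem hjS, card_erase_add_one hkS]
    exact hxp.1
  have := sum_sq_le_of_mem_projSet hxp hcard
  rw [sum_insert hjS, ← add_sum_erase S _ hkS] at this
  linarith

lemma apply_ne_zero_of_mem_projSet {a : EuclideanSpace ℝ (Fin n)} (ha : a ∈ Asp n s) {δ : ℝ}
    (hsmall : ∀ j, a j ≠ 0 → δ < |a j|) (hx : ‖x - a‖ ≤ δ / 2)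
    (hxp : xp ∈ projSet (Asp n s) x) {j : Fin n} (haj : a j ≠ 0) : xp j ≠ 0 := by
  intro hxpj
  have hcoord : ∀ i, |x i - a i| ≤ δ / 2 := fun i =>
    (PiLp.norm_apply_le (x - a) i).trans hx
  have hxj : δ / 2 < |x j| := by
    linarith [hsmall j haj, hcoord j, abs_sub_abs_le_abs_sub (a j) (x j), abs_sub_comm (a j) (x j)]
  by_cases hsub : coordSupport xp ⊆ coordSupport a
  · have hssub : coordSupport xp ⊂ coordSupport a :=
      ssubset_of_subset_of_ne hsub fun h => mem_coordSupport.mp (h ▸ mem_coordSupport.mpr haj) hxpj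
    have hxj0 := eq_zero_of_mem_projSet_of_sparsity_lt hxp
      ((card_lt_card hssub).trans_le ha) hxpj
    linarith [norm_nonneg (x - a), abs_eq_zero.mpr hxj0]
  · obtain ⟨k, hk, hak⟩ := not_subset.mp hsub
    have hxk : |x k| ≤ δ / 2 := by
      simpa [show a k = 0 by simpa using hak] using hcoord k
    have := sq_le_sq.mp (sq_le_sq_of_mem_projSet hxp hxpj (mem_coordSupport.mp hk))
    linarith

lemma norm_eq_of_abs_apply_eq {u v : EuclideanSpace ℝ (Fin n)} (h : ∀ i, |u i| = |v i|) :
    ‖u‖ = ‖v‖ := by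
  rw [← sq_eq_sq₀ (norm_nonneg u) (norm_nonneg v), EuclideanSpace.real_norm_sq_eq,
    EuclideanSpace.real_norm_sq_eq]
  exact sum_congr rfl fun i _ => by rw [← sq_abs, h i, sq_abs]

end Sparse

open Sparse in
theorem stmt1 {n s : ℕ} (a : EuclideanSpace ℝ (Fin n)) (ha : a ∈ Asp n s)
    (δ : ℝ) (hsmall : ∀ j, a j ≠ 0 → δ < |a j|) :
    ∀ x ∈ Metric.closedBall a (δ / 2), ∀ xp ∈ projSet (Asp n s) x,
      ‖((2:ℝ) • xp - x) - a‖ ≤ δ / 2 := by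
  intro x hx xp hxp
  rw [Metric.mem_closedBall, dist_eq_norm] at hx
  refine le_of_eq_of_le (norm_eq_of_abs_apply_eq fun i => ?_) hx
  simp only [PiLp.sub_apply, PiLp.smul_apply, smul_eq_mul]
  by_cases hai : a i = 0
  · rcases eq_or_ne (xp i) 0 with hxpi | hxpi
    · rw [hxpi, hai, ← abs_neg]; ring_nf
    · rw [apply_eq_of_mem_projSet hxp hxpi, hai]; ring_nf
  · rw [apply_eq_of_mem_projSet hxp (apply_ne_zero_of_mem_projSet ha hsmall hx hxp hai)]
    ring_nf
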